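/- For every k ≥ 1 and every universal co-Büchi k-register automaton A over the infinite data-domain D, every data-path of A has exactly one corresponding Boolean path in the product automaton A_B@V_k. -/
import Mathlib


/-- A register word automaton over Boolean signals `P`, data-domain `D`, states `Q`,
and registers indexed by `R` (for a `k`-register automaton, `R = Fin k`).
The transition function reads a Boolean letter, an input-guard and an output-guard
(comparisons of the data-values of `i` resp. `o` with the registers) and yields
a set of (assignment, successor-state) pairs. -/
structure RegAutomaton (P D Q R : Type) where
  d0 : D
  q0 : Q
  F : Set Q
  tr : Q → (P → Bool) → (R → Bool) → (R → Bool) → Set ((R → Bool) × Q)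

/-- A data-path of a register automaton on the letter sequence `(l j, di j, dout j)`. -/
structure DataPath {P D Q R : Type} [DecidableEq D] (A : RegAutomaton P D Q R)
    (l : ℕ → P → Bool) (di dout : ℕ → D) where
  st : ℕ → Q
  regs : ℕ → R → D
  asgn : ℕ → R → Bool
  init_st : st 0 = A.q0
  init_regs : ∀ n, regs 0 n = A.d0
  step : ∀ j, (asgn j, st (j + 1)) ∈
    A.tr (st j) (l j) (fun n => decide (di j = regs j n)) (fun n => decide (dout j = regs j n))
  update : ∀ j n, regs (j + 1) n = if asgn j n then di j else regs j n

/-- The transition relation of the verifier `V_k`: its states are partitions of the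
register set (modelled as setoids); the guard letter must respect the current partition,
and the successor partition is determined by the assignment letter. -/
def VTrans {R : Type} (pa pa' : Setoid R) (gi go a : R → Bool) : Prop :=
  (∀ m n : R, pa.r m n → gi m = gi n ∧ go m = go n) ∧
  (∀ m n : R, ¬ pa.r m n → ¬(gi m = true ∧ gi n = true) ∧ ¬(go m = true ∧ go n = true)) ∧
  (∀ m n : R, pa'.r m n ↔
    ((a m = true ∧ a n = true) ∨ (a m = false ∧ a n = true ∧ gi m = true) ∨
     (a m = true ∧ a n = false ∧ gi n = true) ∨ (a m = false ∧ a n = false ∧ pa.r m n)))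

/-- A Boolean path of the product automaton `A_B @ V_k`: a path of the Boolean
associate of `A` together with the (deterministic) partition component of the
verifier, starting in the one-block partition `⊤`. -/
structure BoolPathV {P D Q R : Type} (A : RegAutomaton P D Q R) where
  st : ℕ → Q
  part : ℕ → Setoid R
  lP : ℕ → P → Bool
  gi : ℕ → R → Bool
  go : ℕ → R → Bool
  asgn : ℕ → R → Bool
  init_st : st 0 = A.q0
  init_part : part 0 = ⊤
  stepA : ∀ j, (asgn j, st (j + 1)) ∈ A.tr (st j) (lP j) (gi j) (go j)
  stepV : ∀ j, VTrans (part j) (part (j + 1)) (gi j) (go j) (asgn j)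

/-- A data-path of `A` corresponds to a Boolean path of `A_B @ V_k` iff, projecting away
the partition component, they visit the same states, carry the same `2^P`-letters, and at
every step the guard and assignment signals encode the guards and assignment of the
data-path. -/
def CorrespondsV {P D Q R : Type} [DecidableEq D] {A : RegAutomaton P D Q R}
    {l : ℕ → P → Bool} {di dout : ℕ → D}
    (dp : DataPath A l di dout) (bp : BoolPathV A) : Prop :=
  (∀ j, bp.st j = dp.st j) ∧ (∀ j, bp.lP j = l j) ∧
  (∀ j, bp.gi j = fun n => decide (di j = dp.regs j n)) ∧
  (∀ j, bp.go j = fun n => decide (dout j = dp.regs j n)) ∧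
  (∀ j, bp.asgn j = dp.asgn j)


lemma BoolPathV.ext' {P D Q R : Type} {A : RegAutomaton P D Q R}
    {b1 b2 : BoolPathV A} (h1 : b1.st = b2.st) (h2 : b1.part = b2.part)
    (h3 : b1.lP = b2.lP) (h4 : b1.gi = b2.gi) (h5 : b1.go = b2.go)
    (h6 : b1.asgn = b2.asgn) : b1 = b2 := by
  cases b1; cases b2
  simp only at h1 h2 h3 h4 h5 h6
  subst h1 h2 h3 h4 h5 h6
  rfl

/-- for every `k ≥ 1` and universal co-Büchi `k`-register automaton `A`,
every data-path of `A` has exactly one corresponding Boolean path in `A_B @ V_k`. -/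
theorem stmt3 (D : Type) [Infinite D] [DecidableEq D] (P Q : Type) [Finite P] [Finite Q]
    (k : ℕ) (hk : 1 ≤ k) (A : RegAutomaton P D Q (Fin k))
    (l : ℕ → P → Bool) (di dout : ℕ → D) (dp : DataPath A l di dout) :
    ∃! bp : BoolPathV A, CorrespondsV dp bp := by
  classical
  let pt : ℕ → Setoid (Fin k) := fun j =>
    ⟨fun m n => dp.regs j m = dp.regs j n,
     ⟨fun _ => rfl, Eq.symm, Eq.trans⟩⟩
  have ptr : ∀ j m n, (pt j).r m n ↔ dp.regs j m = dp.regs j n := fun _ _ _ => Iff.rfl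
  have hstepV : ∀ j, VTrans (pt j) (pt (j+1))
      (fun n => decide (di j = dp.regs j n)) (fun n => decide (dout j = dp.regs j n))
      (dp.asgn j) := by
    intro j
    refine ⟨?_, ?_, ?_⟩
    · intro m n h
      rw [ptr] at h
      simp [h]
    · intro m n h
      rw [ptr] at h
      constructor <;> rintro ⟨hm, hn⟩ <;> simp only [decide_eq_true_eq] at hm hn <;>
        exact h (hm ▸ hn)
    · intro m n
      rw [ptr, dp.update, dp.update]
      rcases hm : dp.asgn j m <;> rcases hn : dp.asgn j n <;>
        simp [hm, hn, eq_comm, ptr]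
  let bp : BoolPathV A :=
    { st := dp.st, part := pt, lP := l
      gi := fun j n => decide (di j = dp.regs j n)
      go := fun j n => decide (dout j = dp.regs j n)
      asgn := dp.asgn
      init_st := dp.init_st
      init_part := by
        apply Setoid.ext
        intro m n
        rw [ptr, dp.init_regs, dp.init_regs]
        simp
      stepA := fun j => dp.step j
      stepV := hstepV }
  refine ⟨bp, ⟨fun _ => rfl, fun _ => rfl, fun _ => rfl, fun _ => rfl, fun _ => rfl⟩, ?_⟩
  rintro b ⟨h1, h2, h3, h4, h5⟩
  have hpart : ∀ j, b.part j = pt j := by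
    intro j
    induction j with
    | zero => rw [b.init_part]; exact bp.init_part.symm
    | succ j ih =>
      apply Setoid.ext
      intro m n
      have hb := (b.stepV j).2.2 m n
      have hc := (hstepV j).2.2 m n
      rw [h3 j, h5 j, ih] at hb
      rw [hb, hc]
  apply BoolPathV.ext' <;> funext j
  · exact h1 j
  · exact hpart j
  · exact h2 j
  · exact h3 j
  · exact h4 j
  · exact h5 j
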